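/- For logit vectors z^s, z^t ∈ ℝ^K (K ≥ 1) satisfying ∑_{j=1}^K z^s_j = ∑_{j=1}^K z^t_j (in particular when both logit vectors have zero mean), lim_{τ→∞} L_KL(z^s, z^t, τ) = (1/(2K))·‖z^s − z^t‖₂², i.e., the infinite-temperature distillation loss equals the mean-squared-error loss between logits up to the factor 1/(2K). -/

import Mathlib

/-!
Write `x = 1/τ`, let `Z_z(x) = ∑ exp (z_j x)` and let `E_x` be the mean under the teacher's
softmax at temperature `1/x`. Then
`KL = x · E_x[zt - zs] + log Z_s(x) - log Z_t(x)`.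
Equal logit sums make `E_0[zt - zs] = 0`, so the first term is `x²` times the derivative of
`E_x[zt - zs]` at `0`, plus `o(x²)`.
The second term vanishes to first order at `0`, so by L'Hôpital it is `x²/2` times the difference of
the variances of `zs` and `zt` under the uniform distribution, plus `o(x²)`.
Adding the two coefficients gives `‖zs - zt‖² / (2K)`.
-/

open Filter Topology

/-- Softened probability of class `k` for logit vector `z` at temperature `τ`. -/
noncomputable def softProb {K : ℕ} (z : Fin K → ℝ) (τ : ℝ) (k : Fin K) : ℝ :=
  Real.exp (z k / τ) / ∑ j, Real.exp (z j / τ)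

/-- Distillation loss `L_KL` between student logits `zs` and teacher logits `zt`
at temperature `τ`. -/
noncomputable def LKL {K : ℕ} (zs zt : Fin K → ℝ) (τ : ℝ) : ℝ :=
  τ ^ 2 * ∑ j, softProb zt τ j * Real.log (softProb zt τ j / softProb zs τ j)

open Real

theorem HasDerivAt.tendsto_div_self_nhdsNE {f : ℝ → ℝ} {c : ℝ} (hf : HasDerivAt f c 0)
    (hf0 : f 0 = 0) : Tendsto (fun x => f x / x) (𝓝[≠] 0) (𝓝 c) := by
  simpa [hf0, div_eq_inv_mul] using hf.tendsto_slope_zero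

theorem tendsto_div_sq_nhdsNE_of_hasDerivAt {f f' : ℝ → ℝ} {c : ℝ}
    (hf : ∀ᶠ x in 𝓝 0, HasDerivAt f (f' x) x) (hf' : HasDerivAt f' c 0)
    (hf0 : f 0 = 0) (hf'0 : f' 0 = 0) :
    Tendsto (fun x => f x / x ^ 2) (𝓝[≠] 0) (𝓝 (c / 2)) := by
  have hcont : Tendsto f (𝓝[≠] 0) (𝓝 0) := by
    simpa [hf0] using hf.self_of_nhds.continuousAt.tendsto.mono_left nhdsWithin_le_nhds
  refine HasDerivAt.lhopital_zero_nhdsNE (f' := f') (g' := fun x => 2 * x)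
    (nhdsWithin_le_nhds hf) (Eventually.of_forall fun x => by simpa using hasDerivAt_pow 2 x)
    (eventually_nhdsWithin_of_forall fun x hx => mul_ne_zero two_ne_zero hx) hcont ?_ ?_
  · simpa using ((continuous_pow 2).tendsto (0 : ℝ)).mono_left nhdsWithin_le_nhds
  · refine ((hf'.tendsto_div_self_nhdsNE hf'0).div_const 2).congr fun x => ?_
    rw [div_div, mul_comm]

section ExpSum

variable {ι : Type*} [Fintype ι]

/-- `expSum z 1 x` is the normalizer of the softmax of `x • z`, and `tiltedMean z w x` is the mean
of `w` under that softmax; `x` plays the role of the inverse temperature. -/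
noncomputable def expSum (z w : ι → ℝ) (x : ℝ) : ℝ := ∑ j, w j * exp (z j * x)

noncomputable def tiltedMean (z w : ι → ℝ) (x : ℝ) : ℝ := expSum z w x / expSum z 1 x

theorem hasDerivAt_expSum (z w : ι → ℝ) (x : ℝ) :
    HasDerivAt (expSum z w) (expSum z (w * z) x) x := by
  refine HasDerivAt.fun_sum fun j _ => ?_
  have := (((hasDerivAt_id x).const_mul (z j)).exp).const_mul (w j)
  simpa [mul_comm, mul_left_comm, mul_assoc] using this

theorem expSum_zero (z w : ι → ℝ) : expSum z w 0 = ∑ j, w j := by simp [expSum]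

theorem expSum_one_pos [Nonempty ι] (z : ι → ℝ) (x : ℝ) : 0 < expSum z 1 x :=
  Finset.sum_pos (fun _ _ => by simpa using exp_pos _) Finset.univ_nonempty

theorem tiltedMean_zero (z w : ι → ℝ) :
    tiltedMean z w 0 = (∑ j, w j) / Fintype.card ι := by
  simp [tiltedMean, expSum_zero]

theorem hasDerivAt_tiltedMean_zero [Nonempty ι] (z w : ι → ℝ) :
    HasDerivAt (tiltedMean z w)
      ((∑ j, w j * z j) / Fintype.card ι - (∑ j, w j) * (∑ j, z j) / Fintype.card ι ^ 2) 0 := by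
  refine ((hasDerivAt_expSum z w 0).div (hasDerivAt_expSum z 1 0)
    (expSum_one_pos z 0).ne').congr_deriv ?_
  simp only [expSum_zero, Pi.mul_apply, Pi.one_apply, Finset.sum_const, Finset.card_univ,
    nsmul_eq_mul, mul_one, one_mul]
  field_simp

theorem hasDerivAt_log_expSum [Nonempty ι] (z : ι → ℝ) (x : ℝ) :
    HasDerivAt (fun x => log (expSum z 1 x)) (tiltedMean z z x) x := by
  simpa [tiltedMean] using (hasDerivAt_expSum z 1 x).log (expSum_one_pos z x).ne'

theorem tiltedMean_one [Nonempty ι] (z : ι → ℝ) (x : ℝ) : tiltedMean z 1 x = 1 :=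
  div_self (expSum_one_pos z x).ne'

theorem tendsto_tiltedMean_div_nhdsNE [Nonempty ι] {z w : ι → ℝ} (hw : ∑ j, w j = 0) :
    Tendsto (fun x => tiltedMean z w x / x) (𝓝[≠] 0)
      (𝓝 ((∑ j, w j * z j) / Fintype.card ι)) := by
  have h := (hasDerivAt_tiltedMean_zero z w).tendsto_div_self_nhdsNE (by simp [tiltedMean_zero, hw])
  simpa [hw] using h

theorem tendsto_log_expSum_sub_div_sq_nhdsNE [Nonempty ι] {z z' : ι → ℝ}
    (hsum : ∑ j, z j = ∑ j, z' j) :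
    Tendsto (fun x => (log (expSum z 1 x) - log (expSum z' 1 x)) / x ^ 2) (𝓝[≠] 0)
      (𝓝 ((∑ j, z j ^ 2 - ∑ j, z' j ^ 2) / (2 * Fintype.card ι))) := by
  have h := tendsto_div_sq_nhdsNE_of_hasDerivAt
    (f := fun x => log (expSum z 1 x) - log (expSum z' 1 x))
    (Eventually.of_forall fun x => (hasDerivAt_log_expSum z x).sub (hasDerivAt_log_expSum z' x))
    ((hasDerivAt_tiltedMean_zero z z).sub (hasDerivAt_tiltedMean_zero z' z'))
    (by simp [expSum_zero]) (by simp [tiltedMean_zero, hsum])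
  convert h using 2
  rw [← hsum]
  field_simp
  ring

end ExpSum

section SoftProb

variable {K : ℕ}

theorem softProb_eq_div_expSum (z : Fin K → ℝ) (τ : ℝ) (k : Fin K) :
    softProb z τ k = exp (z k * τ⁻¹) / expSum z 1 τ⁻¹ := by
  simp [softProb, expSum, div_eq_mul_inv]

theorem sum_softProb_mul (z w : Fin K → ℝ) (τ : ℝ) :
    ∑ j, softProb z τ j * w j = tiltedMean z w τ⁻¹ := by
  simp only [softProb_eq_div_expSum, tiltedMean, expSum, Finset.sum_div]
  exact Finset.sum_congr rfl fun j _ => by ring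

theorem log_softProb_div_softProb [NeZero K] (zs zt : Fin K → ℝ) (τ : ℝ) (k : Fin K) :
    log (softProb zt τ k / softProb zs τ k) =
      (zt k - zs k) * τ⁻¹ + (log (expSum zs 1 τ⁻¹) - log (expSum zt 1 τ⁻¹)) := by
  have hs := (expSum_one_pos zs τ⁻¹).ne'
  have ht := (expSum_one_pos zt τ⁻¹).ne'
  rw [softProb_eq_div_expSum, softProb_eq_div_expSum, div_div_div_eq, log_div, log_mul, log_mul,
    log_exp, log_exp] <;> first | positivity | ring

theorem LKL_eq [NeZero K] (zs zt : Fin K → ℝ) (τ : ℝ) :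
    LKL zs zt τ = τ ^ 2 * (τ⁻¹ * tiltedMean zt (zt - zs) τ⁻¹ +
      (log (expSum zs 1 τ⁻¹) - log (expSum zt 1 τ⁻¹))) := by
  have h := sum_softProb_mul zt (zt - zs) τ
  have h1 := sum_softProb_mul zt 1 τ
  simp only [Pi.sub_apply, Pi.one_apply, mul_one, tiltedMean_one] at h h1
  simp only [LKL, log_softProb_div_softProb, mul_add, Finset.sum_add_distrib, ← mul_assoc,
    ← Finset.sum_mul, h, h1]
  ring

end SoftProb

/-- If the student and teacher logit sums agree, the infinite-temperature distillation
loss equals the MSE loss between logits up to the factor `1/(2K)`. -/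
theorem stmt_8 {K : ℕ} (hK : 1 ≤ K) (zs zt : Fin K → ℝ)
    (hsum : (∑ j, zs j) = ∑ j, zt j) :
    Tendsto (fun τ : ℝ => LKL zs zt τ) atTop
      (𝓝 ((1 / (2 * (K : ℝ))) * ∑ j, (zs j - zt j) ^ 2)) := by
  have : NeZero K := ⟨by omega⟩
  have hG := tendsto_tiltedMean_div_nhdsNE (z := zt) (w := zt - zs)
    (by simp [Finset.sum_sub_distrib, hsum])
  have hL := tendsto_log_expSum_sub_div_sq_nhdsNE hsum
  have hlim := (hG.add hL).comp
    (tendsto_inv_atTop_nhdsGT_zero.mono_right (nhdsGT_le_nhdsNE (0 : ℝ)))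
  convert hlim.congr' ?_ using 2
  · simp only [Fintype.card_fin, Pi.sub_apply, sub_sq, sub_mul, Finset.sum_sub_distrib,
      Finset.sum_add_distrib, mul_assoc, ← Finset.mul_sum]
    field_simp
    ring
  · filter_upwards [eventually_gt_atTop 0] with τ hτ
    rw [Function.comp_apply, LKL_eq]
    field_simp
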